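/- For every λ ∈ ℂ with |Im(λ)| ≤ (n-1)/2 and every r ≥ 0, |ω_λ^{(n)}(a_r)| ≤ 1; moreover, if |Im(λ)| < (n-1)/2 and r > 0 then |ω_λ^{(n)}(a_r)| < 1. -/

import Mathlib

/-!
Put `m = (n - 1) / 2`. Since `‖cos(λs)‖ ≤ cosh(Im λ · s) ≤ cosh(ms)`, the integral defining
`ω_λ(a_r)` is dominated by the one with `cos(λs)` replaced by `cosh(ms)`, that is, by
`ω_{im}(a_r)`, and the domination is strict when `|Im λ| < m` and `r > 0`. It remains to see
that `ω_{im} ≡ 1`. Symmetrising, `2 ∫₀^r (cosh r - cosh s)^{m-1} cosh(ms) ds` equals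
`∫_{-r}^r (cosh r - cosh s)^{m-1} e^{ms} ds`, and the substitution
`x = (e^s - e^{-r}) / (e^r - e^{-r})` turns the latter into `2^{1-m} (2 sinh r)^{2m-1} B(m, m)`.
Legendre's duplication formula `B(m, m) = 2^{1-2m} B(m, 1/2)` then matches the normalisation `a_n`.
-/

open intervalIntegral Real Complex

/-- The real Beta function `B(x,y) = Γ(x)Γ(y)/Γ(x+y)`. -/
noncomputable def realBeta (x y : ℝ) : ℝ :=
  Real.Gamma x * Real.Gamma y / Real.Gamma (x + y)

/-- The normalizing constant `a_n = 2^{(n-1)/2}/B((n-1)/2, 1/2)`. -/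
noncomputable def aconst (n : ℕ) : ℝ :=
  (2:ℝ) ^ (((n:ℝ) - 1) / 2) / realBeta (((n:ℝ) - 1) / 2) (1/2)

/-- The spherical function `ω_λ^{(n)}(a_r)` for complex parameter `λ`, with the
limiting value `1` at `r = 0`. -/
noncomputable def sphFnC (n : ℕ) (lam : ℂ) (r : ℝ) : ℂ :=
  if r = 0 then 1 else
    (aconst n * Real.sinh r ^ ((2:ℝ) - n) : ℝ) *
      ∫ s in (0:ℝ)..r,
        ((Real.cosh r - Real.cosh s) ^ (((n:ℝ) - 3) / 2) : ℝ) * Complex.cos (lam * s)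

open MeasureTheory Set

lemma realBeta_pos {a b : ℝ} (ha : 0 < a) (hb : 0 < b) : 0 < realBeta a b := by
  have := Real.Gamma_pos_of_pos ha
  have := Real.Gamma_pos_of_pos hb
  have := Real.Gamma_pos_of_pos (add_pos ha hb)
  unfold realBeta
  positivity

/-- Legendre's duplication formula, in Beta form. -/
lemma realBeta_self {m : ℝ} (hm : 0 < m) :
    realBeta m m = 2 ^ (1 - 2 * m) * realBeta m (1 / 2) := by
  have key := Real.Gamma_mul_Gamma_add_half m
  have hGm := Real.Gamma_pos_of_pos hm
  have hG2m := Real.Gamma_pos_of_pos (by linarith : 0 < 2 * m)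
  have hGmh := Real.Gamma_pos_of_pos (by linarith : 0 < m + 1 / 2)
  unfold realBeta
  rw [← two_mul, Real.Gamma_one_half_eq]
  field_simp
  rw [show (2 * m + 1) / 2 = m + 1 / 2 by ring]
  linear_combination key

lemma ofReal_betaIntegrand (a b : ℝ) {x : ℝ} (hx : x ∈ Icc (0 : ℝ) 1) :
    ((x ^ (a - 1) * (1 - x) ^ (b - 1) : ℝ) : ℂ) =
      (x : ℂ) ^ ((a : ℂ) - 1) * (1 - (x : ℂ)) ^ ((b : ℂ) - 1) := by
  push_cast [Complex.ofReal_cpow hx.1, Complex.ofReal_cpow (sub_nonneg.2 hx.2)]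
  rfl

lemma integrableOn_betaIntegrand {a b : ℝ} (ha : 0 < a) (hb : 0 < b) :
    IntegrableOn (fun x : ℝ => x ^ (a - 1) * (1 - x) ^ (b - 1)) (Ioo 0 1) := by
  have h := Complex.betaIntegral_convergent (u := a) (v := b) (by simpa) (by simpa)
  rw [intervalIntegrable_iff_integrableOn_Ioo_of_le zero_le_one] at h
  refine IntegrableOn.congr_fun h.re (fun x hx => ?_) measurableSet_Ioo
  rw [← ofReal_betaIntegrand a b (Ioo_subset_Icc_self hx), RCLike.re_to_complex,
    Complex.ofReal_re]

lemma setIntegral_betaIntegrand {a b : ℝ} (ha : 0 < a) (hb : 0 < b) :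
    ∫ x in Ioo 0 1, x ^ (a - 1) * (1 - x) ^ (b - 1) = realBeta a b := by
  have key := Complex.Gamma_mul_Gamma_eq_betaIntegral (s := a) (t := b) (by simpa) (by simpa)
  have hI : Complex.betaIntegral a b =
      ((∫ x in Ioo 0 1, x ^ (a - 1) * (1 - x) ^ (b - 1) : ℝ) : ℂ) := by
    rw [← integral_Ioc_eq_integral_Ioo, ← intervalIntegral.integral_of_le zero_le_one,
      Complex.betaIntegral, ← intervalIntegral.integral_ofReal]
    refine intervalIntegral.integral_congr fun x hx => ?_
    rw [uIcc_of_le zero_le_one] at hx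
    exact (ofReal_betaIntegrand a b hx).symm
  rw [hI, ← Complex.ofReal_add, Complex.Gamma_ofReal, Complex.Gamma_ofReal,
    Complex.Gamma_ofReal] at key
  rw [realBeta, eq_div_iff (Real.Gamma_pos_of_pos (add_pos ha hb)).ne', mul_comm]
  exact_mod_cast key.symm

noncomputable def expSubst (r s : ℝ) : ℝ :=
  (Real.exp s - Real.exp (-r)) / (2 * Real.sinh r)

lemma two_mul_sinh_eq (r : ℝ) : 2 * Real.sinh r = Real.exp r - Real.exp (-r) := by
  rw [Real.sinh_eq]; ring

lemma one_sub_expSubst {r : ℝ} (hr : 0 < r) (s : ℝ) :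
    1 - expSubst r s = (Real.exp r - Real.exp s) / (2 * Real.sinh r) := by
  have : 0 < 2 * Real.sinh r := by positivity
  rw [expSubst]
  field_simp
  rw [two_mul_sinh_eq]
  ring

lemma cosh_sub_cosh_eq_expSubst {r : ℝ} (hr : 0 < r) (s : ℝ) :
    Real.cosh r - Real.cosh s =
      expSubst r s * (1 - expSubst r s) * ((2 * Real.sinh r) ^ 2 / (2 * Real.exp s)) := by
  have hc : 0 < 2 * Real.sinh r := by positivity
  have hrr : Real.exp r * Real.exp (-r) = 1 := by
    rw [← Real.exp_add, add_neg_cancel, Real.exp_zero]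
  rw [one_sub_expSubst hr, expSubst, Real.cosh_eq, Real.cosh_eq, Real.exp_neg s]
  field_simp
  linear_combination hrr

lemma cosh_sub_cosh_rpow_mul_exp_eq {r s : ℝ} (m : ℝ) (hr : 0 < r) (hs : s ∈ Icc (-r) r) :
    (Real.cosh r - Real.cosh s) ^ (m - 1) * Real.exp (m * s) =
      Real.exp s / (2 * Real.sinh r) * (2 ^ (1 - m) * (2 * Real.sinh r) ^ (2 * m - 1) *
        (expSubst r s ^ (m - 1) * (1 - expSubst r s) ^ (m - 1))) := by
  set c := 2 * Real.sinh r
  have hc : 0 < c := by positivity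
  have hu := Real.exp_pos s
  have hx : 0 ≤ expSubst r s :=
    div_nonneg (sub_nonneg.2 (Real.exp_le_exp.2 hs.1)) hc.le
  have hx' : 0 ≤ 1 - expSubst r s := by
    rw [one_sub_expSubst hr]
    exact div_nonneg (sub_nonneg.2 (Real.exp_le_exp.2 hs.2)) hc.le
  have hum : Real.exp s ^ m = Real.exp s ^ (m - 1) * Real.exp s := by
    rw [Real.rpow_sub_one hu.ne']; field_simp
  have hcm : c ^ (2 * m - 1) = c ^ (2 * (m - 1)) * c := by
    rw [show 2 * m - 1 = 2 * (m - 1) + 1 by ring, Real.rpow_add hc, Real.rpow_one]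
  have htwo : (2 : ℝ) ^ (1 - m) = (2 ^ (m - 1))⁻¹ := by
    rw [← Real.rpow_neg zero_le_two, neg_sub]
  rw [cosh_sub_cosh_eq_expSubst hr, Real.mul_rpow (mul_nonneg hx hx') (by positivity),
    Real.mul_rpow hx hx', Real.div_rpow (by positivity) (by positivity),
    Real.mul_rpow zero_le_two hu.le, ← Real.rpow_natCast, ← Real.rpow_mul hc.le, mul_comm m s,
    Real.exp_mul, hum, hcm, htwo]
  push_cast
  field_simp

lemma hasDerivAt_expSubst (r s : ℝ) :
    HasDerivAt (expSubst r) (Real.exp s / (2 * Real.sinh r)) s :=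
  ((Real.hasDerivAt_exp s).sub_const _).div_const _

lemma expSubst_strictMono {r : ℝ} (hr : 0 < r) : StrictMono (expSubst r) := fun _ _ h =>
  div_lt_div_of_pos_right (sub_lt_sub_right (Real.exp_lt_exp.2 h) _) (by positivity)

lemma expSubst_image_Ioo {r : ℝ} (hr : 0 < r) : expSubst r '' Ioo (-r) r = Ioo 0 1 := by
  have hc : 2 * Real.sinh r ≠ 0 := by positivity
  rw [Continuous.image_Ioo_of_strictMono (by unfold expSubst; fun_prop) (expSubst_strictMono hr),
    expSubst, expSubst, sub_self, zero_div, ← two_mul_sinh_eq, div_self hc]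

lemma intervalIntegrable_cosh_sub_cosh_rpow_mul_exp {m r : ℝ} (hm : 0 < m) (hr : 0 < r) :
    IntervalIntegrable (fun s => (Real.cosh r - Real.cosh s) ^ (m - 1) * Real.exp (m * s))
      volume (-r) r := by
  rw [intervalIntegrable_iff_integrableOn_Ioo_of_le (by linarith)]
  have h := (integrableOn_image_iff_integrableOn_abs_deriv_smul measurableSet_Ioo
    (fun s _ => (hasDerivAt_expSubst r s).hasDerivWithinAt)
    (expSubst_strictMono hr).injective.injOn
    fun x => 2 ^ (1 - m) * (2 * Real.sinh r) ^ (2 * m - 1) * (x ^ (m - 1) * (1 - x) ^ (m - 1))).1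
    (by rw [expSubst_image_Ioo hr]; exact (integrableOn_betaIntegrand hm hm).const_mul _)
  refine h.congr_fun (fun s hs => ?_) measurableSet_Ioo
  dsimp only
  rw [cosh_sub_cosh_rpow_mul_exp_eq m hr (Ioo_subset_Icc_self hs), smul_eq_mul,
    abs_of_pos (by positivity)]

lemma integral_cosh_sub_cosh_rpow_mul_exp {m r : ℝ} (hm : 0 < m) (hr : 0 < r) :
    ∫ s in -r..r, (Real.cosh r - Real.cosh s) ^ (m - 1) * Real.exp (m * s) =
      2 ^ (1 - m) * (2 * Real.sinh r) ^ (2 * m - 1) * realBeta m m := by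
  rw [intervalIntegral.integral_of_le (by linarith), integral_Ioc_eq_integral_Ioo,
    ← setIntegral_betaIntegrand hm hm, ← MeasureTheory.integral_const_mul,
    ← expSubst_image_Ioo hr, integral_image_eq_integral_abs_deriv_smul
    measurableSet_Ioo (fun s _ => (hasDerivAt_expSubst r s).hasDerivWithinAt)
    (expSubst_strictMono hr).injective.injOn]
  refine setIntegral_congr_fun measurableSet_Ioo fun s hs => ?_
  rw [smul_eq_mul, abs_of_pos (by positivity),
    cosh_sub_cosh_rpow_mul_exp_eq m hr (Ioo_subset_Icc_self hs)]

lemma IntervalIntegrable.add_comp_neg {E : Type*} [NormedAddCommGroup E] {f : ℝ → E} {r : ℝ}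
    (hr : 0 ≤ r) (hf : IntervalIntegrable f volume (-r) r) :
    IntervalIntegrable (fun x => f x + f (-x)) volume 0 r := by
  have h₁ : IntervalIntegrable f volume (-r) 0 :=
    hf.mono_set (by rw [uIcc_of_le (by linarith), uIcc_of_le (by linarith)]; gcongr)
  have h₂ : IntervalIntegrable f volume 0 r :=
    hf.mono_set (by rw [uIcc_of_le hr, uIcc_of_le (by linarith)]; gcongr; linarith)
  exact h₂.add (by simpa using ((IntervalIntegrable.iff_comp_neg (f := f)).1 h₁).symm)

lemma integral_add_comp_neg {E : Type*} [NormedAddCommGroup E] [NormedSpace ℝ E] {f : ℝ → E}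
    {r : ℝ} (hr : 0 ≤ r) (hf : IntervalIntegrable f volume (-r) r) :
    ∫ x in 0..r, (f x + f (-x)) = ∫ x in -r..r, f x := by
  have h₁ : IntervalIntegrable f volume (-r) 0 :=
    hf.mono_set (by rw [uIcc_of_le (by linarith), uIcc_of_le (by linarith)]; gcongr)
  have h₂ : IntervalIntegrable f volume 0 r :=
    hf.mono_set (by rw [uIcc_of_le hr, uIcc_of_le (by linarith)]; gcongr; linarith)
  have h₃ : IntervalIntegrable (fun x => f (-x)) volume 0 r := by
    simpa using ((IntervalIntegrable.iff_comp_neg (f := f)).1 h₁).symm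
  rw [integral_add h₂ h₃, integral_comp_neg, neg_zero, add_comm,
    integral_add_adjacent_intervals h₁ h₂]

lemma cosh_sub_cosh_rpow_mul_cosh (r m s : ℝ) :
    (Real.cosh r - Real.cosh s) ^ (m - 1) * Real.cosh (m * s) =
      2⁻¹ * ((Real.cosh r - Real.cosh s) ^ (m - 1) * Real.exp (m * s) +
        (Real.cosh r - Real.cosh (-s)) ^ (m - 1) * Real.exp (m * -s)) := by
  rw [Real.cosh_neg, Real.cosh_eq (m * s), mul_neg]
  ring

lemma intervalIntegrable_cosh_sub_cosh_rpow_mul_cosh {m r : ℝ} (hm : 0 < m) (hr : 0 < r) :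
    IntervalIntegrable (fun s => (Real.cosh r - Real.cosh s) ^ (m - 1) * Real.cosh (m * s))
      volume 0 r := by
  simpa only [cosh_sub_cosh_rpow_mul_cosh] using
    ((intervalIntegrable_cosh_sub_cosh_rpow_mul_exp hm hr).add_comp_neg hr.le).const_mul 2⁻¹

lemma integral_cosh_sub_cosh_rpow_mul_cosh {m r : ℝ} (hm : 0 < m) (hr : 0 < r) :
    ∫ s in 0..r, (Real.cosh r - Real.cosh s) ^ (m - 1) * Real.cosh (m * s) =
      Real.sinh r ^ (2 * m - 1) * realBeta m (1 / 2) / 2 ^ m := by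
  have hpow : (2 : ℝ) ^ (1 - m) * 2 ^ (2 * m - 1) * 2 ^ (1 - 2 * m) * 2 ^ m = 2 := by
    rw [← Real.rpow_add two_pos, ← Real.rpow_add two_pos, ← Real.rpow_add two_pos]
    norm_num
  simp only [cosh_sub_cosh_rpow_mul_cosh]
  rw [intervalIntegral.integral_const_mul,
    integral_add_comp_neg hr.le (intervalIntegrable_cosh_sub_cosh_rpow_mul_exp hm hr),
    integral_cosh_sub_cosh_rpow_mul_exp hm hr, realBeta_self hm,
    Real.mul_rpow zero_le_two (Real.sinh_nonneg_iff.2 hr.le)]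
  field_simp
  linear_combination realBeta m (1 / 2) * hpow

lemma sub_one_div_two_pos {n : ℕ} (hn : 2 ≤ n) : 0 < ((n : ℝ) - 1) / 2 := by
  have : (2 : ℝ) ≤ n := by exact_mod_cast hn
  linarith

lemma aconst_mul_integral_cosh_sub_cosh_rpow_mul_cosh {n : ℕ} (hn : 2 ≤ n) {r : ℝ}
    (hr : 0 < r) :
    aconst n * Real.sinh r ^ ((2 : ℝ) - n) *
      ∫ s in 0..r, (Real.cosh r - Real.cosh s) ^ (((n : ℝ) - 1) / 2 - 1) *
        Real.cosh (((n : ℝ) - 1) / 2 * s) = 1 := by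
  set m := ((n : ℝ) - 1) / 2 with hm_def
  have hm : 0 < m := sub_one_div_two_pos hn
  have hβ := realBeta_pos hm one_half_pos
  have hsinh : Real.sinh r ^ ((2 : ℝ) - n) * Real.sinh r ^ (2 * m - 1) = 1 := by
    rw [← Real.rpow_add (Real.sinh_pos_iff.2 hr), show (2 : ℝ) - n + (2 * m - 1) = 0 by ring,
      Real.rpow_zero]
  rw [integral_cosh_sub_cosh_rpow_mul_cosh hm hr, aconst, ← hm_def]
  calc _ = 2 ^ m / realBeta m (1 / 2) * (realBeta m (1 / 2) / 2 ^ m) *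
          (Real.sinh r ^ ((2 : ℝ) - n) * Real.sinh r ^ (2 * m - 1)) := by ring
    _ = 1 := by rw [hsinh]; field_simp

lemma norm_cos_le_cosh_im (z : ℂ) : ‖Complex.cos z‖ ≤ Real.cosh z.im := by
  rw [Complex.cos, norm_div, Complex.norm_ofNat, Real.cosh_eq]
  gcongr
  refine (norm_add_le _ _).trans_eq ?_
  simp only [Complex.norm_exp, Complex.mul_re, Complex.neg_re, Complex.neg_im, Complex.I_re,
    Complex.I_im]
  ring_nf

lemma norm_cos_mul_ofReal_le {lam : ℂ} {m : ℝ} (hlam : |lam.im| ≤ m) (s : ℝ) :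
    ‖Complex.cos (lam * s)‖ ≤ Real.cosh (m * s) := by
  refine (norm_cos_le_cosh_im _).trans (Real.cosh_le_cosh.2 ?_)
  rw [Complex.im_mul_ofReal, abs_mul, abs_mul, abs_of_nonneg ((abs_nonneg _).trans hlam)]
  gcongr

lemma norm_cos_mul_ofReal_lt {lam : ℂ} {m s : ℝ} (hlam : |lam.im| < m) (hs : s ≠ 0) :
    ‖Complex.cos (lam * s)‖ < Real.cosh (m * s) := by
  refine (norm_cos_le_cosh_im _).trans_lt (Real.cosh_lt_cosh.2 ?_)
  rw [Complex.im_mul_ofReal, abs_mul, abs_mul, abs_of_nonneg ((abs_nonneg _).trans hlam.le)]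
  gcongr

section Comparison

variable {w : ℝ → ℝ} {lam : ℂ} {m r : ℝ}

lemma intervalIntegrable_ofReal_mul_cos
    (hw : IntervalIntegrable (fun s => w s * Real.cosh (m * s)) volume 0 r) :
    IntervalIntegrable (fun s => (w s : ℂ) * Complex.cos (lam * s)) volume 0 r := by
  have hcont : Continuous fun s : ℝ => Complex.cos (lam * s) / (Real.cosh (m * s) : ℂ) :=
    Continuous.div (by fun_prop) (by fun_prop) fun s =>
      Complex.ofReal_ne_zero.2 (Real.cosh_pos _).ne'
  have hw' : IntervalIntegrable (fun s => ((w s * Real.cosh (m * s) : ℝ) : ℂ)) volume 0 r :=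
    ⟨hw.1.ofReal, hw.2.ofReal⟩
  convert hw'.mul_continuousOn hcont.continuousOn using 2 with s
  have : (Real.cosh (m * s) : ℂ) ≠ 0 := Complex.ofReal_ne_zero.2 (Real.cosh_pos _).ne'
  rw [Complex.ofReal_mul]
  field_simp

lemma norm_integral_ofReal_mul_cos_le (hr : 0 ≤ r) (hw₀ : ∀ s ∈ Ioo 0 r, 0 ≤ w s)
    (hw : IntervalIntegrable (fun s => w s * Real.cosh (m * s)) volume 0 r)
    (hlam : |lam.im| ≤ m) :
    ‖∫ s in 0..r, (w s : ℂ) * Complex.cos (lam * s)‖ ≤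
      ∫ s in 0..r, w s * Real.cosh (m * s) := by
  refine (intervalIntegral.norm_integral_le_integral_norm hr).trans
    (integral_mono_on_of_le_Ioo hr (intervalIntegrable_ofReal_mul_cos hw).norm hw fun s hs => ?_)
  rw [norm_mul, Complex.norm_real, Real.norm_of_nonneg (hw₀ s hs)]
  exact mul_le_mul_of_nonneg_left (norm_cos_mul_ofReal_le hlam s) (hw₀ s hs)

lemma norm_integral_ofReal_mul_cos_lt (hr : 0 < r) (hw₀ : ∀ s ∈ Ioo 0 r, 0 < w s)
    (hw : IntervalIntegrable (fun s => w s * Real.cosh (m * s)) volume 0 r)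
    (hlam : |lam.im| < m) :
    ‖∫ s in 0..r, (w s : ℂ) * Complex.cos (lam * s)‖ <
      ∫ s in 0..r, w s * Real.cosh (m * s) := by
  have hf := (intervalIntegrable_ofReal_mul_cos (lam := lam) hw).norm
  refine (intervalIntegral.norm_integral_le_integral_norm hr.le).trans_lt ?_
  rw [← sub_pos, ← integral_sub hw hf]
  refine intervalIntegral_pos_of_pos_on (hw.sub hf) (fun s hs => ?_) hr
  rw [sub_pos, norm_mul, Complex.norm_real, Real.norm_of_nonneg (hw₀ s hs).le]
  exact mul_lt_mul_of_pos_left (norm_cos_mul_ofReal_lt hlam hs.1.ne') (hw₀ s hs)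

end Comparison

lemma aconst_mul_sinh_rpow_pos {n : ℕ} (hn : 2 ≤ n) {r : ℝ} (hr : 0 < r) :
    0 < aconst n * Real.sinh r ^ ((2 : ℝ) - n) :=
  mul_pos (div_pos (by positivity) (realBeta_pos (sub_one_div_two_pos hn) one_half_pos))
    (Real.rpow_pos_of_pos (Real.sinh_pos_iff.2 hr) _)

lemma norm_sphFnC {n : ℕ} (hn : 2 ≤ n) (lam : ℂ) {r : ℝ} (hr : 0 < r) :
    ‖sphFnC n lam r‖ = aconst n * Real.sinh r ^ ((2 : ℝ) - n) *
      ‖∫ s in 0..r, ((Real.cosh r - Real.cosh s) ^ (((n : ℝ) - 1) / 2 - 1) : ℝ) *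
        Complex.cos (lam * s)‖ := by
  rw [sphFnC, if_neg hr.ne', norm_mul, Complex.norm_real,
    Real.norm_of_nonneg (aconst_mul_sinh_rpow_pos hn hr).le,
    show ((n : ℝ) - 3) / 2 = ((n : ℝ) - 1) / 2 - 1 by ring]

lemma cosh_sub_cosh_rpow_pos {r s : ℝ} (a : ℝ) (hs : s ∈ Ioo 0 r) :
    0 < (Real.cosh r - Real.cosh s) ^ a := by
  refine Real.rpow_pos_of_pos (sub_pos.2 (Real.cosh_lt_cosh.2 ?_)) a
  rw [abs_of_pos hs.1, abs_of_pos (hs.1.trans hs.2)]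
  exact hs.2

theorem sphFnC_bounded (n : ℕ) (hn : 2 ≤ n) (lam : ℂ) (r : ℝ) :
    (|lam.im| ≤ ((n:ℝ) - 1) / 2 → 0 ≤ r → ‖sphFnC n lam r‖ ≤ 1) ∧
    (|lam.im| < ((n:ℝ) - 1) / 2 → 0 < r → ‖sphFnC n lam r‖ < 1) := by
  have hm := sub_one_div_two_pos hn
  refine ⟨fun hlam hr => ?_, fun hlam hr => ?_⟩
  · rcases hr.eq_or_lt with rfl | hr
    · simp [sphFnC]
    calc ‖sphFnC n lam r‖ = _ := norm_sphFnC hn lam hr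
      _ ≤ _ := mul_le_mul_of_nonneg_left (norm_integral_ofReal_mul_cos_le hr.le
          (fun s hs => (cosh_sub_cosh_rpow_pos _ hs).le)
          (intervalIntegrable_cosh_sub_cosh_rpow_mul_cosh hm hr) hlam)
          (aconst_mul_sinh_rpow_pos hn hr).le
      _ = 1 := aconst_mul_integral_cosh_sub_cosh_rpow_mul_cosh hn hr
  · calc ‖sphFnC n lam r‖ = _ := norm_sphFnC hn lam hr
      _ < _ := mul_lt_mul_of_pos_left (norm_integral_ofReal_mul_cos_lt hr
          (fun s hs => cosh_sub_cosh_rpow_pos _ hs)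
          (intervalIntegrable_cosh_sub_cosh_rpow_mul_cosh hm hr) hlam)
          (aconst_mul_sinh_rpow_pos hn hr)
      _ = 1 := aconst_mul_integral_cosh_sub_cosh_rpow_mul_cosh hn hr
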